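/- (Type D_n.) Let 𝐣 ∈ J_{k,r}. For every subset S ⊆ supp⁺(𝐣), the partition 𝐣⁺(S) lies in J_{k,r} and π_r(𝐣⁺(S)) = π_r(𝐣); and for every subset S ⊆ supp⁻(𝐣), the partition 𝐣⁻(S) lies in J_{k,r} and π_r(𝐣⁻(S)) = π_r(𝐣). -/

import Mathlib

noncomputable section

/-- The ℓ-weight lattice `P_q`, realized concretely as the additive group of
finitely supported functions on pairs (node index, spectral parameter);
the fundamental ℓ-weight `ω_{j,a}` corresponds to the indicator of `(j,a)`. -/
abbrev Pq : Type := (ℤ × ℂ) →₀ ℤ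

/-- The fundamental ℓ-weight `ω_{j,a}` (in additive notation), with the
convention `ω_{j,a} = 0` (the identity element) unless `1 ≤ j ≤ n`. -/
def lomega (n : ℕ) (j : ℤ) (a : ℂ) : Pq :=
  if 1 ≤ j ∧ j ≤ (n : ℤ) then Finsupp.single (j, a) 1 else 0

/-- The (1-based) position function of a partition represented by its finite
support `S ⊆ ℤ`: `ι_S(j_s) = s`. -/
def iotaF (S : Finset ℤ) (x : ℤ) : ℕ := (S.filter (fun y => y ≤ x)).card

/-- Type `D_n`: `π_r(j,s) = ω_{j, q^{i+j-2s-2r}}^{-1} · ω_{j, q^{2n-2-i-j+2s}}`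
(additively). -/
def piD1 (n i r : ℕ) (q : ℂ) (j s : ℤ) : Pq :=
  -lomega n j (q ^ ((i : ℤ) + j - 2 * s - 2 * (r : ℤ))) +
    lomega n j (q ^ (2 * (n : ℤ) - 2 - (i : ℤ) - j + 2 * s))

/-- Type `D_n`: `π_r(𝐣)` for a partition `𝐣 ∈ J_{k,r}` represented by its
underlying `k`-element set `S` (`k = S.card`): if `j_k < n-1` it is
`ω_{r, q^{r-i}} ∏_{s=1}^{k} π_r(j_s-1, s-1) π_r(j_s, s)^{-1}`, and if `j_k = n-1`
there is the extra factor `(ω_{n, q^{n+i-2r-2k-1}}^{-1} ω_{n, q^{n-i+2k-1}})^{-1}`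
(additive notation). -/
def piD (n i r : ℕ) (q : ℂ) (S : Finset ℤ) : Pq :=
  lomega n (r : ℤ) (q ^ ((r : ℤ) - (i : ℤ))) +
    ∑ x ∈ S, (piD1 n i r q (x - 1) ((iotaF S x : ℤ) - 1) -
      piD1 n i r q x (iotaF S x)) +
    (if ((n : ℤ) - 1) ∈ S then
      lomega n (n : ℤ) (q ^ ((n : ℤ) + (i : ℤ) - 2 * (r : ℤ) - 2 * (S.card : ℤ) - 1)) -
        lomega n (n : ℤ) (q ^ ((n : ℤ) - (i : ℤ) + 2 * (S.card : ℤ) - 1))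
     else 0)

/-- Type `D_n`: `π_r(𝐣,+) = ω_{n, q^{n-i+2k-1}} ω_{n, q^{n+i-2r-2k-1}}^{-1}`
(additively). -/
def piDplus (n i r k : ℕ) (q : ℂ) : Pq :=
  lomega n (n : ℤ) (q ^ ((n : ℤ) - (i : ℤ) + 2 * (k : ℤ) - 1)) -
    lomega n (n : ℤ) (q ^ ((n : ℤ) + (i : ℤ) - 2 * (r : ℤ) - 2 * (k : ℤ) - 1))

/-- Type `D_n`: `π_r(𝐣,-) = ω_{n-1, q^{n-i+2k-1}} ω_{n-1, q^{n+i-2r-2k-1}}^{-1}`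
(additively). -/
def piDminus (n i r k : ℕ) (q : ℂ) : Pq :=
  lomega n ((n : ℤ) - 1) (q ^ ((n : ℤ) - (i : ℤ) + 2 * (k : ℤ) - 1)) -
    lomega n ((n : ℤ) - 1) (q ^ ((n : ℤ) + (i : ℤ) - 2 * (r : ℤ) - 2 * (k : ℤ) - 1))

/-- Membership in `J_{k,r}` (type `D_n`): `S` is the underlying `k`-element set
of a strictly increasing sequence `r < j_1 < ⋯ < j_k ≤ n-1`. -/
def memJD (n r k : ℕ) (S : Finset ℤ) : Prop :=
  S.card = k ∧ ∀ x ∈ S, (r : ℤ) < x ∧ x ≤ (n : ℤ) - 1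

/-- `σ⁺_S(j)`: the largest `j' ∈ S` with `j' ≥ j` such that `j'' - j < 2(ι(j'') - ι(j))`
for all `j'' ∈ S` with `j < j'' ≤ j'`. -/
def sigmaP (S : Finset ℤ) (j : ℤ) : ℤ :=
  WithBot.unbotD j (Finset.max (S.filter (fun j' => j ≤ j' ∧
    ∀ j'' ∈ S, j < j'' → j'' ≤ j' →
      j'' - j < 2 * ((iotaF S j'' : ℤ) - (iotaF S j : ℤ)))))

/-- `σ⁻_S(j)`: the smallest `j' ∈ S` with `j' ≤ j` such that `j - j'' < 2(ι(j) - ι(j''))`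
for all `j'' ∈ S` with `j' ≤ j'' < j`. -/
def sigmaM (S : Finset ℤ) (j : ℤ) : ℤ :=
  WithTop.untopD j (Finset.min (S.filter (fun j' => j' ≤ j ∧
    ∀ j'' ∈ S, j' ≤ j'' → j'' < j →
      j - j'' < 2 * ((iotaF S j : ℤ) - (iotaF S j'' : ℤ)))))

/-- `τ⁺_S(j) = j + 2(ι(σ⁺(j)) - ι(j)) + 1`. -/
def tauP (S : Finset ℤ) (j : ℤ) : ℤ :=
  j + 2 * ((iotaF S (sigmaP S j) : ℤ) - (iotaF S j : ℤ)) + 1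

/-- `τ⁻_S(j) = j + 2(ι(σ⁻(j)) - ι(j)) - 1`. -/
def tauM (S : Finset ℤ) (j : ℤ) : ℤ :=
  j + 2 * ((iotaF S (sigmaM S j) : ℤ) - (iotaF S j : ℤ)) - 1

/-- The set of integers between `a` and `b` inclusive, regardless of order. -/
def itv (a b : ℤ) : Finset ℤ := Finset.Icc (min a b) (max a b)

/-- The symmetric difference `(S \ T) ∪ (T \ S)`. -/
def symmd (S T : Finset ℤ) : Finset ℤ := (S \ T) ∪ (T \ S)

/-- `supp_m(S) = { j ∈ S : 2 ι_S(j) = j - m }`. -/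
def suppm (m : ℤ) (S : Finset ℤ) : Finset ℤ :=
  S.filter (fun j => 2 * (iotaF S j : ℤ) = j - m)

/-- `𝐣⁺(j) = 𝐣_{[j, τ⁺(j)]}`. -/
def opP (S : Finset ℤ) (j : ℤ) : Finset ℤ := symmd S (itv j (tauP S j))

/-- `𝐣⁻(j) = 𝐣_{[j, τ⁻(j)]}`. -/
def opM (S : Finset ℤ) (j : ℤ) : Finset ℤ := symmd S (itv j (tauM S j))

/-- Successive application of the operation `f` at each element of the finite
set `T` (elements processed in increasing order; by the disjointness of the
relevant intervals the result does not depend on the order). -/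
def applyAll (f : Finset ℤ → ℤ → Finset ℤ) (S T : Finset ℤ) : Finset ℤ :=
  if h : T.Nonempty then applyAll f (f S (T.min' h)) (T.erase (T.min' h)) else S
termination_by T.card
decreasing_by exact Finset.card_erase_lt_of_mem (T.min'_mem h)


/-! Each operation `𝐣 ↦ 𝐣^±(j)` with `j ∈ supp^±(𝐣)` replaces `𝐣` on an interval `[l, t]`, half of
whose points lie in `𝐣`, by its complement there. This keeps the size of `𝐣` and all positions
outside `[l, t]`, and on `[l - 1, t]` it reflects `x - 2ι(x)` in `c = n - i + r - 1`. The factor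
`π_r(x, s)` is odd under this reflection and trivial on the line `x - 2s = c`, which contains
both `(l - 1, ι(l - 1))` and `(t, ι(t))`; so the factors coming from `[l, t]` telescope to the
same (trivial) product before and after the flip. The extra factor present when `j_k = n - 1` can
only be toggled when `2k = i - r`, where it is trivial. Finally, the elements of `supp^±(𝐣)`
beyond `j` lie beyond `t` and stay in `supp^±`, so the operations can be performed one after
another.
-/

open Finset

section Position

variable {S : Finset ℤ} {x y : ℤ}

lemma iotaF_mono (S : Finset ℤ) (h : x ≤ y) : iotaF S x ≤ iotaF S y :=
  card_le_card <| monotone_filter_right S fun _ _ hz => hz.trans h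

lemma iotaF_le_card (S : Finset ℤ) (x : ℤ) : iotaF S x ≤ #S :=
  card_le_card (filter_subset _ _)

lemma iotaF_eq_add_card_inter (S : Finset ℤ) (h : x ≤ y + 1) :
    iotaF S y = iotaF S (x - 1) + #(S ∩ Icc x y) := by
  unfold iotaF
  rw [← card_union_of_disjoint]
  · congr 1
    ext z
    simp only [mem_filter, mem_union, mem_inter, mem_Icc]
    grind
  · rw [disjoint_left]
    intro z
    simp only [mem_filter, mem_inter, mem_Icc]
    omega

lemma iotaF_of_mem (hx : x ∈ S) : iotaF S x = iotaF S (x - 1) + 1 := by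
  rw [iotaF_eq_add_card_inter S (le_add_of_nonneg_right zero_le_one), Icc_self,
    inter_singleton_of_mem hx, card_singleton]

lemma iotaF_lt_of_mem (hx : x ∈ S) (h : y < x) : iotaF S y < iotaF S x := by
  have := iotaF_mono S (show y ≤ x - 1 by omega)
  rw [iotaF_of_mem hx]
  omega

lemma exists_mem_of_iotaF_lt (h : iotaF S x < iotaF S y) : ∃ z ∈ S, x < z ∧ z ≤ y := by
  by_contra! hS
  refine h.not_ge (card_le_card fun z hz => ?_)
  simp only [mem_filter] at hz ⊢
  exact ⟨hz.1, not_lt.mp fun hxz => (hS z hz.1 hxz).not_ge hz.2⟩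

end Position

section Flip

variable {S : Finset ℤ} {l t x : ℤ}

lemma mem_symmd {T : Finset ℤ} : x ∈ symmd S T ↔ x ∈ S ∧ x ∉ T ∨ x ∈ T ∧ x ∉ S :=
  mem_symmDiff

lemma iotaF_symmd_of_lt (h : x < l) : iotaF (symmd S (Icc l t)) x = iotaF S x := by
  unfold iotaF
  congr 1
  ext y
  simp only [mem_filter, mem_symmd, mem_Icc]
  grind

lemma iotaF_symmd_add_iotaF (hlx : l - 1 ≤ x) (hxt : x ≤ t) :
    (iotaF (symmd S (Icc l t)) x : ℤ) + iotaF S x = 2 * iotaF S (l - 1) + (x - l + 1) := by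
  have hinter : symmd S (Icc l t) ∩ Icc l x = Icc l x \ S := by
    ext y
    simp only [mem_inter, mem_sdiff, mem_symmd, mem_Icc]
    grind
  have h₁ := iotaF_eq_add_card_inter (symmd S (Icc l t)) (show l ≤ x + 1 by omega)
  have h₂ := iotaF_eq_add_card_inter S (show l ≤ x + 1 by omega)
  have h₃ := card_sdiff_add_card_inter (Icc l x) S
  rw [hinter, iotaF_symmd_of_lt (sub_one_lt l)] at h₁
  rw [inter_comm] at h₃
  have h₄ := Int.card_Icc_of_le l x (by omega)
  omega

lemma iotaF_symmd_of_le (hbal : 2 * (#(S ∩ Icc l t) : ℤ) = t - l + 1) (h : t ≤ x) :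
    iotaF (symmd S (Icc l t)) x = iotaF S x := by
  have hinter : symmd S (Icc l t) ∩ Icc (t + 1) x = S ∩ Icc (t + 1) x := by
    ext y
    simp only [mem_inter, mem_symmd, mem_Icc]
    grind
  have hcard : (0 : ℤ) ≤ #(S ∩ Icc l t) := Nat.cast_nonneg _
  have h₁ := iotaF_eq_add_card_inter (symmd S (Icc l t)) (show t + 1 ≤ x + 1 by omega)
  have h₂ := iotaF_eq_add_card_inter S (show t + 1 ≤ x + 1 by omega)
  have h₃ := iotaF_symmd_add_iotaF (S := S) (show l - 1 ≤ t by omega) le_rfl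
  have h₄ := iotaF_eq_add_card_inter S (show l ≤ t + 1 by omega)
  rw [hinter, add_sub_cancel_right] at h₁
  rw [add_sub_cancel_right] at h₂
  omega

lemma card_symmd (hbal : 2 * (#(S ∩ Icc l t) : ℤ) = t - l + 1) :
    #(symmd S (Icc l t)) = #S := by
  have hdisj : Disjoint (S \ Icc l t) (Icc l t \ S) := disjoint_sdiff_sdiff
  have h₁ := card_sdiff_add_card_inter S (Icc l t)
  have h₂ := card_sdiff_add_card_inter (Icc l t) S
  have h₃ := Int.card_Icc_of_le l t (by omega)
  rw [symmd, card_union_of_disjoint hdisj]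
  rw [inter_comm] at h₂
  omega

end Flip

section PartitionSum

variable {A : Type*} [AddCommGroup A]

lemma sum_Icc_sub_eq_sub (f : ℤ → A) {l t : ℤ} (h : l - 1 ≤ t) :
    ∑ x ∈ Icc l t, (f (x - 1) - f x) = f (l - 1) - f t := by
  induction t, h using Int.leInduction with
  | base => simp
  | succ t ht ih =>
    rw [← Order.succ_eq_add_one, ← insert_Icc_right_eq_Icc_succ (by simpa using ht),
      sum_insert (by simp), ih, Order.succ_eq_add_one, add_sub_cancel_right]
    abel

/-- The additive form of `∏_s π(j_s - 1, s - 1) π(j_s, s)⁻¹`. -/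
def partitionSum (g : ℤ → ℤ → A) (S : Finset ℤ) : A :=
  ∑ x ∈ S, (g (x - 1) ((iotaF S x : ℤ) - 1) - g x (iotaF S x))

variable (g : ℤ → ℤ → A) {c l t : ℤ} {S : Finset ℤ}

lemma partitionSum_eq_sum_sub (S : Finset ℤ) :
    partitionSum g S = ∑ x ∈ S, (g (x - 1) (iotaF S (x - 1)) - g x (iotaF S x)) := by
  refine sum_congr rfl fun x hx => ?_
  rw [iotaF_of_mem hx]
  push_cast
  rw [add_sub_cancel_right]

/-- On the interval, the positions in the flipped set are the reflections of the old ones in the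
line `x - 2s = c`, and the old terms over the whole interval telescope to zero. -/
lemma partitionSum_symmd
    (hrefl : ∀ x s s', x - 2 * s + (x - 2 * s') = 2 * c → g x s' = -g x s)
    (hzero : ∀ x s, x - 2 * s = c → g x s = 0)
    (hbal : 2 * (#(S ∩ Icc l t) : ℤ) = t - l + 1) (hl : l - 1 - 2 * (iotaF S (l - 1) : ℤ) = c) :
    partitionSum g (symmd S (Icc l t)) = partitionSum g S := by
  have hcard : (0 : ℤ) ≤ #(S ∩ Icc l t) := Nat.cast_nonneg _
  have hin : ∀ y, l - 1 ≤ y → y ≤ t →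
      g y (iotaF (symmd S (Icc l t)) y) = -g y (iotaF S y) := fun y h₁ h₂ =>
    hrefl _ _ _ (by have := iotaF_symmd_add_iotaF (S := S) h₁ h₂; omega)
  have hout : ∀ y, y < l ∨ t ≤ y → iotaF (symmd S (Icc l t)) y = iotaF S y := by
    rintro y (hy | hy)
    · exact iotaF_symmd_of_lt hy
    · exact iotaF_symmd_of_le hbal hy
  have htel : ∑ x ∈ Icc l t, (g (x - 1) (iotaF S (x - 1)) - g x (iotaF S x)) = 0 := by
    have ht := iotaF_eq_add_card_inter S (show l ≤ t + 1 by omega)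
    rw [sum_Icc_sub_eq_sub (fun y => g y (iotaF S y)) (by omega), hzero _ _ hl,
      hzero _ _ (by omega), sub_zero]
  have hsplit := sum_inter_add_sum_sdiff (Icc l t) S
    (fun x => g (x - 1) (iotaF S (x - 1)) - g x (iotaF S x))
  rw [htel] at hsplit
  rw [partitionSum_eq_sum_sub, partitionSum_eq_sum_sub,
    ← sum_inter_add_sum_sdiff S (Icc l t), add_comm, inter_comm,
    ← neg_eq_of_add_eq_zero_left hsplit, ← sum_neg_distrib]
  refine (sum_union disjoint_sdiff_sdiff).trans (congrArg₂ _ ?_ ?_) <;>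
    refine sum_congr rfl fun x hx => ?_ <;> simp only [mem_sdiff, mem_Icc] at hx
  · rw [hout x (by omega), hout (x - 1) (by omega)]
  · rw [hin x (by omega) hx.1.2, hin (x - 1) (by omega) (by omega), neg_sub_neg, neg_sub]

end PartitionSum

section TypeD

variable {n i r k : ℕ} {q : ℂ} {S : Finset ℤ} {l t x : ℤ}

lemma piD1_reflect {s s' : ℤ} (h : x - 2 * s + (x - 2 * s') = 2 * ((n : ℤ) - i + r - 1)) :
    piD1 n i r q x s' = -piD1 n i r q x s := by
  unfold piD1
  rw [show (i : ℤ) + x - 2 * s' - 2 * r = 2 * n - 2 - i - x + 2 * s by omega,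
    show 2 * (n : ℤ) - 2 - i - x + 2 * s' = i + x - 2 * s - 2 * r by omega]
  abel

lemma piD1_eq_zero {s : ℤ} (h : x - 2 * s = (n : ℤ) - i + r - 1) : piD1 n i r q x s = 0 := by
  unfold piD1
  rw [show (i : ℤ) + x - 2 * s - 2 * r = 2 * n - 2 - i - x + 2 * s by omega, neg_add_cancel]

lemma piD_symmd (hbal : 2 * (#(S ∩ Icc l t) : ℤ) = t - l + 1)
    (hl : l - 1 - 2 * (iotaF S (l - 1) : ℤ) = (n : ℤ) - i + r - 1)
    (hedge : (n : ℤ) - 1 ∈ Icc l t → (i : ℤ) - r = 2 * #S) :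
    piD n i r q (symmd S (Icc l t)) = piD n i r q S := by
  have hsum := partitionSum_symmd (piD1 n i r q) (fun _ _ _ => piD1_reflect)
    (fun _ _ => piD1_eq_zero) hbal hl
  unfold partitionSum at hsum
  unfold piD
  rw [hsum, card_symmd hbal]
  congr 1
  by_cases hI : (n : ℤ) - 1 ∈ Icc l t
  · have hexp : (n : ℤ) + i - 2 * r - 2 * #S - 1 = n - i + 2 * #S - 1 := by
      have := hedge hI
      omega
    simp only [hexp, sub_self, ite_self]
  · simp only [mem_symmd, hI, not_false_eq_true, and_true, false_and, or_false]

lemma memJD_symmd (hS : memJD n r k S) (hbal : 2 * (#(S ∩ Icc l t) : ℤ) = t - l + 1)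
    (hrl : (r : ℤ) < l) (htn : t ≤ (n : ℤ) - 1) : memJD n r k (symmd S (Icc l t)) := by
  refine ⟨(card_symmd hbal).trans hS.1, fun x hx => ?_⟩
  rcases mem_symmd.mp hx with ⟨hxS, -⟩ | ⟨hxI, -⟩
  · exact hS.2 x hxS
  · rw [mem_Icc] at hxI
    omega

lemma mem_suppm_symmd {c : ℤ} (hbal : 2 * (#(S ∩ Icc l t) : ℤ) = t - l + 1)
    (hx : x ∈ suppm c S) (htx : t < x) : x ∈ suppm c (symmd S (Icc l t)) := by
  rw [suppm, mem_filter] at hx ⊢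
  rw [iotaF_symmd_of_le hbal htx.le, mem_symmd, mem_Icc]
  exact ⟨Or.inl ⟨hx.1, by omega⟩, hx.2⟩

end TypeD

lemma unbotD_max_eq_max' {α : Type*} [LinearOrder α] {P : Finset α} {a : α} (ha : a ∈ P) :
    WithBot.unbotD a P.max = P.max' ⟨a, ha⟩ := by
  rw [← coe_max' ⟨a, ha⟩, WithBot.unbotD_coe]

lemma untopD_min_eq_min' {α : Type*} [LinearOrder α] {P : Finset α} {a : α} (ha : a ∈ P) :
    WithTop.untopD a P.min = P.min' ⟨a, ha⟩ := by
  rw [← coe_min' ⟨a, ha⟩, WithTop.untopD_coe]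

section Sigma

variable {S : Finset ℤ} {j x : ℤ}

lemma sigmaP_spec (hj : j ∈ S) :
    sigmaP S j ∈ S ∧ j ≤ sigmaP S j ∧
      (∀ y ∈ S, j < y → y ≤ sigmaP S j → y - j < 2 * ((iotaF S y : ℤ) - iotaF S j)) ∧
      ∀ x ∈ S, j ≤ x → (∀ y ∈ S, j < y → y ≤ x → y - j < 2 * ((iotaF S y : ℤ) - iotaF S j)) →
        x ≤ sigmaP S j := by
  have hjP : j ∈ S.filter fun x => j ≤ x ∧ ∀ y ∈ S, j < y → y ≤ x →
      y - j < 2 * ((iotaF S y : ℤ) - iotaF S j) :=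
    mem_filter.mpr ⟨hj, le_rfl, fun _ _ h₁ h₂ => absurd h₂ h₁.not_ge⟩
  rw [sigmaP, unbotD_max_eq_max' hjP]
  obtain ⟨hS, hj, hcond⟩ := mem_filter.mp (max'_mem _ ⟨j, hjP⟩)
  exact ⟨hS, hj, hcond, fun x hx hjx hx' => le_max' _ x (mem_filter.mpr ⟨hx, hjx, hx'⟩)⟩

lemma sigmaM_spec (hj : j ∈ S) :
    sigmaM S j ∈ S ∧ sigmaM S j ≤ j ∧
      (∀ y ∈ S, sigmaM S j ≤ y → y < j → j - y < 2 * ((iotaF S j : ℤ) - iotaF S y)) ∧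
      ∀ x ∈ S, x ≤ j → (∀ y ∈ S, x ≤ y → y < j → j - y < 2 * ((iotaF S j : ℤ) - iotaF S y)) →
        sigmaM S j ≤ x := by
  have hjP : j ∈ S.filter fun x => x ≤ j ∧ ∀ y ∈ S, x ≤ y → y < j →
      j - y < 2 * ((iotaF S j : ℤ) - iotaF S y) :=
    mem_filter.mpr ⟨hj, le_rfl, fun _ _ h₁ h₂ => absurd h₁ h₂.not_ge⟩
  rw [sigmaM, untopD_min_eq_min' hjP]
  obtain ⟨hS, hj, hcond⟩ := mem_filter.mp (min'_mem _ ⟨j, hjP⟩)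
  exact ⟨hS, hj, hcond, fun x hx hjx hx' => min'_le _ x (mem_filter.mpr ⟨hx, hjx, hx'⟩)⟩

/-- `S` has no element in `(σ⁺(j), τ⁺(j)]`. -/
lemma iotaF_tauP (hj : j ∈ S) : iotaF S (tauP S j) = iotaF S (sigmaP S j) := by
  obtain ⟨hσS, hjσ, hcond, hmax⟩ := sigmaP_spec hj
  have hισ := iotaF_mono S hjσ
  have hστ : sigmaP S j ≤ tauP S j := by
    rcases hjσ.eq_or_lt with h | h
    · rw [tauP, ← h]
      omega
    · have := hcond _ hσS h le_rfl
      rw [tauP]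
      omega
  refine le_antisymm (not_lt.mp fun hlt => ?_) (iotaF_mono S hστ)
  obtain ⟨x, hxS, hσx, hxτ⟩ := exists_mem_of_iotaF_lt hlt
  refine hσx.not_ge (hmax x hxS (by omega) fun y hyS hjy hyx => ?_)
  rcases le_or_gt y (sigmaP S j) with hyσ | hσy
  · exact hcond y hyS hjy hyσ
  · have := iotaF_lt_of_mem hyS hσy
    rw [tauP] at hxτ
    omega

/-- `S` has no element in `[τ⁻(j), σ⁻(j))`. -/
lemma iotaF_tauM_sub_one (hj : j ∈ S) :
    iotaF S (tauM S j - 1) = iotaF S (sigmaM S j - 1) := by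
  obtain ⟨hσS, hσj, hcond, hmin⟩ := sigmaM_spec hj
  have hισ := iotaF_mono S hσj
  have hτσ : tauM S j ≤ sigmaM S j := by
    rcases hσj.eq_or_lt with h | h
    · rw [tauM, h]
      omega
    · have := hcond _ hσS le_rfl h
      rw [tauM]
      omega
  refine le_antisymm (iotaF_mono S (by omega)) (not_lt.mp fun hlt => ?_)
  obtain ⟨x, hxS, hτx, hxσ⟩ := exists_mem_of_iotaF_lt hlt
  refine (hmin x hxS (by omega) fun y hyS hxy hyj => ?_).not_gt (by omega)
  rcases le_or_gt (sigmaM S j) y with hσy | hyσ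
  · exact hcond y hyS hσy hyj
  · have := iotaF_lt_of_mem hσS hyσ
    rw [tauM] at hτx
    omega

lemma tauP_lt_of_mem_suppm {c : ℤ} (hj : j ∈ suppm c S) (hx : x ∈ suppm c S) (hjx : j < x) :
    tauP S j < x := by
  rw [suppm, mem_filter] at hj hx
  obtain ⟨hσS, -, hcond, -⟩ := sigmaP_spec hj.1
  refine not_le.mp fun hxτ => ?_
  rcases le_or_gt x (sigmaP S j) with hxσ | hσx
  · have := hcond x hx.1 hjx hxσ
    omega
  · have := iotaF_lt_of_mem hx.1 hσx
    have := iotaF_mono S hxτ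
    rw [iotaF_tauP hj.1] at this
    omega

end Sigma

section Steps

variable {n i r k : ℕ} {N : ℤ} {q : ℂ} {S : Finset ℤ} {j : ℤ}

lemma opP_step (hk : 2 * k + r ≤ i) (hN : N = (n : ℤ) - i + r - 2) (hS : memJD n r k S)
    (hj : j ∈ suppm N S) :
    memJD n r k (opP S j) ∧ piD n i r q (opP S j) = piD n i r q S ∧
      ∀ x ∈ suppm N S, j < x → x ∈ suppm N (opP S j) := by
  obtain ⟨hjS, hjι⟩ := mem_filter.mp hj
  obtain ⟨-, hjσ, -, -⟩ := sigmaP_spec hjS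
  have hισ := iotaF_mono S hjσ
  have hσk : iotaF S (sigmaP S j) ≤ k := hS.1 ▸ iotaF_le_card S _
  have hτ : tauP S j = j + 2 * ((iotaF S (sigmaP S j) : ℤ) - iotaF S j) + 1 := rfl
  have hbal : 2 * (#(S ∩ Icc j (tauP S j)) : ℤ) = tauP S j - j + 1 := by
    have := iotaF_eq_add_card_inter S (show j ≤ tauP S j + 1 by omega)
    have := iotaF_of_mem hjS
    have := iotaF_tauP hjS
    omega
  have hopP : opP S j = symmd S (Icc j (tauP S j)) := by
    rw [opP, itv, min_eq_left (by omega), max_eq_right (by omega)]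
  have hjr := hS.2 j hjS
  rw [hopP]
  refine ⟨memJD_symmd hS hbal hjr.1 (by omega), piD_symmd hbal ?_ fun hnτ => ?_,
    fun x hx hjx => mem_suppm_symmd hbal hx (tauP_lt_of_mem_suppm hj hx hjx)⟩
  · have := iotaF_of_mem hjS
    omega
  · rw [mem_Icc] at hnτ
    have := hS.1
    omega

lemma opM_step (hin : i ≤ n - 2) (hk : 2 * k + r ≤ i) (hN : N = (n : ℤ) - i + r - 2)
    (hS : memJD n r k S) (hj : j ∈ suppm (N + 1) S) :
    memJD n r k (opM S j) ∧ piD n i r q (opM S j) = piD n i r q S ∧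
      ∀ x ∈ suppm (N + 1) S, j < x → x ∈ suppm (N + 1) (opM S j) := by
  obtain ⟨hjS, hjι⟩ := mem_filter.mp hj
  obtain ⟨hσS, hσj, -, -⟩ := sigmaM_spec hjS
  have hισ := iotaF_mono S hσj
  have hσ := iotaF_of_mem hσS
  have hjk : iotaF S j ≤ k := hS.1 ▸ iotaF_le_card S _
  have hτ : tauM S j = j + 2 * ((iotaF S (sigmaM S j) : ℤ) - iotaF S j) - 1 := rfl
  have hbal : 2 * (#(S ∩ Icc (tauM S j) j) : ℤ) = j - tauM S j + 1 := by
    have := iotaF_eq_add_card_inter S (show tauM S j ≤ j + 1 by omega)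
    rw [iotaF_tauM_sub_one hjS] at this
    omega
  have hopM : opM S j = symmd S (Icc (tauM S j) j) := by
    rw [opM, itv, min_eq_right (by omega), max_eq_left (by omega)]
  have hjr := hS.2 j hjS
  rw [hopM]
  -- `r < τ⁻(j) = N + 2ι(σ⁻(j))` needs `i < n`: as `k ≥ 1`, `i ≥ 2` and `i ≤ n - 2` is not truncated
  refine ⟨memJD_symmd hS hbal (by omega) hjr.2, piD_symmd hbal ?_ fun hnj => ?_,
    fun x hx hjx => mem_suppm_symmd hbal hx hjx⟩
  · rw [iotaF_tauM_sub_one hjS]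
    omega
  · rw [mem_Icc] at hnj
    have := hS.1
    omega

end Steps

lemma applyAll_induction {f : Finset ℤ → ℤ → Finset ℤ} {A : Finset ℤ → Finset ℤ}
    {P : Finset ℤ → Prop}
    (step : ∀ S, P S → ∀ j ∈ A S, P (f S j) ∧ ∀ x ∈ A S, j < x → x ∈ A (f S j))
    {S T : Finset ℤ} (hS : P S) (hT : T ⊆ A S) : P (applyAll f S T) := by
  induction T using Finset.strongInduction generalizing S with
  | _ T ih =>
    rw [applyAll]
    split_ifs with hne
    · obtain ⟨hPf, hA⟩ := step S hS _ (hT (T.min'_mem hne))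
      refine ih _ (erase_ssubset (T.min'_mem hne)) hPf fun x hx => ?_
      obtain ⟨hxne, hxT⟩ := mem_erase.mp hx
      exact hA x (hT hxT) (lt_of_le_of_ne (T.min'_le x hxT) (Ne.symm hxne))
    · exact hS

theorem piD_invariant_general (n i r M k : ℕ) (N : ℤ) (q : ℂ) (hin : i ≤ n - 2)
    (hri : r ≤ i) (hM : M = (i - r) / 2) (hk : k ≤ M)
    (hN : N = (n : ℤ) - (i : ℤ) + (r : ℤ) - 2)
    (S : Finset ℤ) (hS : memJD n r k S) :
    (∀ T ⊆ suppm N S,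
      memJD n r k (applyAll opP S T) ∧
      piD n i r q (applyAll opP S T) = piD n i r q S) ∧
    (∀ T ⊆ suppm (N + 1) S,
      memJD n r k (applyAll opM S T) ∧
      piD n i r q (applyAll opM S T) = piD n i r q S) := by
  have hk' : 2 * k + r ≤ i := by omega
  refine ⟨fun T hT => applyAll_induction (P := fun S' =>
      memJD n r k S' ∧ piD n i r q S' = piD n i r q S) ?_ ⟨hS, rfl⟩ hT,
    fun T hT => applyAll_induction (P := fun S' =>
      memJD n r k S' ∧ piD n i r q S' = piD n i r q S) ?_ ⟨hS, rfl⟩ hT⟩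
  · rintro S' ⟨hS', hpiD⟩ j hj
    obtain ⟨hmem, hstep, hA⟩ := opP_step (q := q) hk' hN hS' hj
    exact ⟨⟨hmem, hstep.trans hpiD⟩, hA⟩
  · rintro S' ⟨hS', hpiD⟩ j hj
    obtain ⟨hmem, hstep, hA⟩ := opM_step (q := q) hin hk' hN hS' hj
    exact ⟨⟨hmem, hstep.trans hpiD⟩, hA⟩

/-- type D_n: for `𝐣 ∈ J_{k,r}` (with `N = n-i+r-2`,
`supp⁺ = supp_N`, `supp⁻ = supp_{N+1}`), for every `S ⊆ supp⁺(𝐣)` the partition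
`𝐣⁺(S)` lies in `J_{k,r}` and `π_r(𝐣⁺(S)) = π_r(𝐣)`, and for every
`S ⊆ supp⁻(𝐣)` the partition `𝐣⁻(S)` lies in `J_{k,r}` and
`π_r(𝐣⁻(S)) = π_r(𝐣)`. -/
theorem piD_invariant (n i r M k : ℕ) (N : ℤ) (q : ℂ) (hn : 4 ≤ n) (hq : q ≠ 0)
    (hroot : ∀ m : ℕ, m ≠ 0 → q ^ m ≠ 1) (hi : 1 < i) (hin : i ≤ n - 2)
    (hri : r ≤ i) (hpar : r % 2 = i % 2) (hM : M = (i - r) / 2) (hk : k ≤ M)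
    (hN : N = (n : ℤ) - (i : ℤ) + (r : ℤ) - 2)
    (S : Finset ℤ) (hS : memJD n r k S) :
    (∀ T ⊆ suppm N S,
      memJD n r k (applyAll opP S T) ∧
      piD n i r q (applyAll opP S T) = piD n i r q S) ∧
    (∀ T ⊆ suppm (N + 1) S,
      memJD n r k (applyAll opM S T) ∧
      piD n i r q (applyAll opM S T) = piD n i r q S) :=
  piD_invariant_general n i r M k N q hin hri hM hk hN S hS
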